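/- Existence lemma for Kh in the canonical model: let s ∈ S^c, let G, H be groups with ∅ ≠ H ⊆ G, and let (ψ,H) be an atomic canonical action executable on [s]_G (every state in the ∼^c_G-class of s has a (ψ,H)-successor). If Kh_G φ ∈ ed(s') for every state s' such that [s]_G →_{(ψ,H)} [s']_G, then Kh_G φ ∈ ed(s). -/

import Mathlib

/-!
Executability of `(ψ,H)` at `s` itself gives `Kh_H ψ ∈ ed(s)`. Every MCS `Y` that contains
`K_H ψ` and `{χ | K_∅ χ ∈ ed(s)}` is the last MCS of the `(ψ,H)`-successor `s⟨(ψ,H),∅⟩Y`, so it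
contains `Kh_G φ`; hence `K_∅ (K_H ψ → Kh_G φ) ∈ ed(s)`. AxEmpMono and T turn this into
`Kh_G K_H ψ → Kh_G Kh_G φ`, while AxKhtoKhK and AxKhMono give `Kh_G K_H ψ` from `Kh_H ψ`;
AxKhKh finishes.
-/

namespace DKH

/-- Groups of agents: subsets of the finite agent set `I = {i_0, …, i_{n-1}}`. -/
abbrev Grp (n : ℕ) := Finset (Fin n)

/-- The language DKH: φ ::= ⊤ | p | ¬φ | (φ∧φ) | K_G φ | Kh_G φ. -/
inductive Formula (P : Type) (n : ℕ) : Type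
  | top  : Formula P n
  | atom : P → Formula P n
  | neg  : Formula P n → Formula P n
  | and  : Formula P n → Formula P n → Formula P n
  | K    : Grp n → Formula P n → Formula P n
  | Kh   : Grp n → Formula P n → Formula P n

instance {P n} : Inhabited (Formula P n) := ⟨.top⟩

namespace Formula
/-- Defined implication φ → ψ := ¬(φ ∧ ¬ψ). -/
def imp {P n} (φ ψ : Formula P n) : Formula P n := .neg (φ.and ψ.neg)
/-- Defined falsum ⊥ := ¬⊤. -/
def bot {P : Type} {n : ℕ} : Formula P n := .neg .top
end Formula

/-- A model ⟨S, {∼_i}, {A_G}, {→_a}, V⟩. -/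
structure KhModel (P : Type) (n : ℕ) where
  State : Type
  Act : Type
  sim : Fin n → State → State → Prop
  sim_equiv : ∀ i, Equivalence (sim i)
  A : Grp n → Set Act
  A_empty : A ∅ = ∅
  A_disj : ∀ G H : Grp n, G ⊂ H → A G ∩ A H = ∅
  tr : Act → State → State → Prop
  V : P → Set State

/-- Distributed indistinguishability: s ∼_G t iff s ∼_i t for every i ∈ G. -/
def gsim {P n} (M : KhModel P n) (G : Grp n) (s t : M.State) : Prop :=
  ∀ i ∈ G, M.sim i s t

/-- Distributed actions: atomic group actions, or joint tuples ⟨d_0,…,d_k⟩. -/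
inductive DAct (Act : Type) : Type
  | atom : Act → DAct Act
  | joint : List (DAct Act) → DAct Act

mutual
/-- Distributed transition relation: →_{⟨d_0,…,d_k⟩} = ⋂_j →_{d_j}. -/
def dtr {Act State : Type} (tr : Act → State → State → Prop) :
    DAct Act → State → State → Prop
  | .atom a, s, t => tr a s t
  | .joint ds, s, t => dtrList tr ds s t

def dtrList {Act State : Type} (tr : Act → State → State → Prop) :
    List (DAct Act) → State → State → Prop
  | [], _, _ => True
  | d :: ds, s, t => dtr tr d s t ∧ dtrList tr ds s t
end

/-- `Gs` is a partial partition of `G`: a family of nonempty, pairwise disjoint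
blocks, all included in `G` (i.e. a partition of a subset of `G`). -/
def PartialPartition {n : ℕ} (G : Grp n) (Gs : List (Grp n)) : Prop :=
  (∀ B ∈ Gs, B ≠ ∅) ∧ Gs.Pairwise (fun B C => Disjoint B C) ∧ (∀ B ∈ Gs, B ⊆ G)

/-- The fixed ordering on mutually disjoint nonempty groups: G ≺ H iff the
minimal index of an agent in G is below that of H. -/
def grpLt {n : ℕ} (B C : Grp n) : Prop := B.min < C.min

/-- Membership in the set A*_G of distributed actions of group G:
the closure of A^+_G = ⋃_{G'⊆G} A_{G'} under forming joint actions
⟨d_0,…,d_k⟩ ∈ A*_{G_0} × ⋯ × A*_{G_k} for non-trivial partial partitions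
{G_0,…,G_k} of G listed in the fixed order ≺. -/
inductive star {n : ℕ} {Act : Type} (A : Grp n → Set Act) : Grp n → DAct Act → Prop
  | base {G G' : Grp n} {a : Act} :
      G' ⊆ G → a ∈ A G' → star A G (.atom a)
  | joint {G : Grp n} {Gs : List (Grp n)} {ds : List (DAct Act)} :
      2 ≤ Gs.length → PartialPartition G Gs → Gs.Chain' grpLt →
      List.Forall₂ (star A) Gs ds → star A G (.joint ds)

/-- Membership in A^+_G = ⋃_{G'⊆G} A_{G'} (as a set of distributed actions). -/
def inAplus {n : ℕ} {Act : Type} (A : Grp n → Set Act) (G : Grp n) (d : DAct Act) : Prop :=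
  ∃ G' : Grp n, G' ⊆ G ∧ ∃ a ∈ A G', d = .atom a

/-- d is executable on X if every s ∈ X has a d-successor. -/
def ExecutableOn {P n} (M : KhModel P n) (d : DAct M.Act) (X : Set M.State) : Prop :=
  ∀ s ∈ X, ∃ t, dtr M.tr d s t

/-- A strategy of group G: a partial function from ∼_G-equivalence classes to
A*_G such that the prescribed action is executable on the class. -/
structure Strategy {P n} (M : KhModel P n) (G : Grp n) where
  act : M.State → Option (DAct M.Act)
  uniform : ∀ s t, gsim M G s t → act s = act t
  mem_star : ∀ s d, act s = some d → star M.A G d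
  exec : ∀ s d, act s = some d → ∀ t, gsim M G s t → ∃ u, dtr M.tr d t u

/-- One step of an execution: [s]_G →_{σ([s]_G)} [t]_G. -/
def stepRel {P n} {M : KhModel P n} {G : Grp n} (σ : Strategy M G) (s t : M.State) : Prop :=
  ∃ d, σ.act s = some d ∧ ∃ u v, gsim M G s u ∧ gsim M G t v ∧ dtr M.tr d u v

/-- Leaf-nodes of the finite complete executions of σ starting from [s]_G,
as a ∼_G-closed set of states. -/
def CELeaf {P n} {M : KhModel P n} {G : Grp n} (σ : Strategy M G) (s : M.State) :
    Set M.State :=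
  {t | ∃ (m : ℕ) (f : ℕ → M.State), gsim M G s (f 0) ∧
    (∀ j < m, stepRel σ (f j) (f (j+1))) ∧ σ.act (f m) = none ∧ gsim M G (f m) t}

/-- There is an infinite (hence complete) execution of σ starting from [s]_G. -/
def InfiniteFrom {P n} {M : KhModel P n} {G : Grp n} (σ : Strategy M G) (s : M.State) : Prop :=
  ∃ f : ℕ → M.State, gsim M G s (f 0) ∧ ∀ j, stepRel σ (f j) (f (j+1))

/-- Inner-nodes of the complete executions of σ starting from [s]_G,
as a ∼_G-closed set of states. -/
def CEInner {P n} {M : KhModel P n} {G : Grp n} (σ : Strategy M G) (s : M.State) :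
    Set M.State :=
  {t | (∃ (m : ℕ) (f : ℕ → M.State), gsim M G s (f 0) ∧
          (∀ j < m, stepRel σ (f j) (f (j+1))) ∧ σ.act (f m) = none ∧
          ∃ j < m, gsim M G (f j) t) ∨
       (∃ f : ℕ → M.State, gsim M G s (f 0) ∧
          (∀ j, stepRel σ (f j) (f (j+1))) ∧ ∃ j, gsim M G (f j) t)}

/-- Truth at a pointed model. -/
def Sat {P n} (M : KhModel P n) : M.State → Formula P n → Prop
  | _, .top => True
  | s, .atom p => s ∈ M.V p
  | s, .neg φ => ¬ Sat M s φ
  | s, .and φ ψ => Sat M s φ ∧ Sat M s ψ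
  | s, .K G φ => ∀ t, gsim M G s t → Sat M t φ
  | s, .Kh G φ => ∃ σ : Strategy M G,
      (∀ t ∈ CELeaf σ s, Sat M t φ) ∧ ¬ InfiniteFrom σ s

/-- Boolean evaluation treating ⊤, ¬, ∧ as connectives and everything else
as atoms; used to define propositional tautologies. -/
def beval {P n} (v : Formula P n → Bool) : Formula P n → Bool
  | .top => true
  | .atom p => v (.atom p)
  | .neg φ => !(beval v φ)
  | .and φ ψ => beval v φ && beval v ψ
  | .K G φ => v (.K G φ)
  | .Kh G φ => v (.Kh G φ)

/-- Instances of propositional tautologies. -/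
def IsTaut {P n} (φ : Formula P n) : Prop := ∀ v, beval v φ = true

/-- The proof system SDKH. -/
inductive Provable {P : Type} {n : ℕ} : Formula P n → Prop
  | taut {φ} : IsTaut φ → Provable φ
  | distK {G : Grp n} {φ ψ} :
      Provable (((Formula.K G φ).and (Formula.K G (φ.imp ψ))).imp (Formula.K G ψ))
  | axT {G : Grp n} {φ} : Provable ((Formula.K G φ).imp φ)
  | ax4 {G : Grp n} {φ} : Provable ((Formula.K G φ).imp (Formula.K G (Formula.K G φ)))
  | ax5 {G : Grp n} {φ} :
      Provable ((Formula.neg (Formula.K G φ)).imp (Formula.K G (Formula.neg (Formula.K G φ))))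
  | axKMono {G H : Grp n} {φ} : G ⊆ H → Provable ((Formula.K G φ).imp (Formula.K H φ))
  | axKhMono {G H : Grp n} {φ} : G ⊆ H → Provable ((Formula.Kh G φ).imp (Formula.Kh H φ))
  | axKtoKh {G : Grp n} {φ} : Provable ((Formula.K G φ).imp (Formula.Kh G φ))
  | axEmpKhtoK {φ} : Provable ((Formula.Kh ∅ φ).imp (Formula.K ∅ φ))
  | axKhtoKKh {G : Grp n} {φ} : Provable ((Formula.Kh G φ).imp (Formula.K G (Formula.Kh G φ)))
  | axEmpMono {G : Grp n} {φ ψ} :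
      Provable ((Formula.K ∅ (φ.imp ψ)).imp (Formula.K ∅ ((Formula.Kh G φ).imp (Formula.Kh G ψ))))
  | axKhbot {G : Grp n} : Provable ((Formula.Kh G Formula.bot).imp Formula.bot)
  | axKhtoKhK {G : Grp n} {φ} : Provable ((Formula.Kh G φ).imp (Formula.Kh G (Formula.K G φ)))
  | axKhKh {G : Grp n} {φ} : Provable ((Formula.Kh G (Formula.Kh G φ)).imp (Formula.Kh G φ))
  | mp {φ ψ} : Provable (φ.imp ψ) → Provable φ → Provable ψ
  | necK {G : Grp n} {φ} : Provable φ → Provable (Formula.K G φ)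

/-- Conjunction of a finite list of formulas. -/
def conj {P n} (L : List (Formula P n)) : Formula P n := L.foldr Formula.and Formula.top

/-- SDKH-consistency of a set of formulas. -/
def Consistent {P n} (X : Set (Formula P n)) : Prop :=
  ¬ ∃ L : List (Formula P n), (∀ φ ∈ L, φ ∈ X) ∧ Provable ((conj L).imp Formula.bot)

/-- Maximal consistent sets. -/
def MCS {P n} (X : Set (Formula P n)) : Prop :=
  Consistent X ∧ ∀ φ ∉ X, ¬ Consistent (insert φ X)

/-! ### The canonical model -/

/-- One step ⟨(φ,G),H⟩X of a mixed sequence. -/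
structure CStep (P : Type) (n : ℕ) where
  fml : Formula P n
  G : Grp n
  H : Grp n
  X : Set (Formula P n)

instance {P n} : Inhabited (CStep P n) := ⟨⟨.top, ∅, ∅, ∅⟩⟩

/-- The conditions on a mixed sequence X_0⟨(φ_1,G_1),H_1⟩X_1⋯⟨(φ_n,G_n),H_n⟩X_n
(the previous MCS being `X`). -/
def goodFrom {P n} : Set (Formula P n) → List (CStep P n) → Prop
  | _, [] => True
  | X, c :: rest =>
      MCS c.X ∧ c.G ≠ ∅ ∧ (Formula.Kh c.G c.fml) ∈ X ∧ (Formula.K c.G c.fml) ∈ c.X ∧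
      (∀ ψ, (Formula.K c.H ψ) ∈ X → ψ ∈ c.X) ∧ goodFrom c.X rest

/-- The final MCS `ed(s)` of a mixed sequence. -/
def edOf {P n} (X0 : Set (Formula P n)) (l : List (CStep P n)) : Set (Formula P n) :=
  l.foldl (fun _ c => c.X) X0

/-- States of the canonical model: mixed sequences starting at X_0. -/
def CState {P : Type} {n : ℕ} (X0 : Set (Formula P n)) := {l : List (CStep P n) // goodFrom X0 l}

/-- Canonical epistemic relation ∼^c_i. -/
def csim {P n} (X0 : Set (Formula P n)) (i : Fin n) (s t : CState X0) : Prop :=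
  ∃ k : ℕ, k ≤ s.1.length ∧ k ≤ t.1.length ∧
    (∀ j < k, (s.1.getD j default).X = (t.1.getD j default).X ∧
              (s.1.getD j default).H = (t.1.getD j default).H) ∧
    (∀ j, k ≤ j → j < s.1.length → i ∈ (s.1.getD j default).H) ∧
    (∀ j, k ≤ j → j < t.1.length → i ∈ (t.1.getD j default).H)

/-- Canonical atomic actions: pairs (φ, G). -/
abbrev CAct (P : Type) (n : ℕ) := Formula P n × Grp n

/-- Canonical atomic action sets A^c_G = {(φ,G) : φ ∈ DKH} for G ≠ ∅, A^c_∅ = ∅. -/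
def cA {P : Type} {n : ℕ} (G : Grp n) : Set (CAct P n) := {a | a.2 = G ∧ G ≠ ∅}

/-- Canonical transition: s →_{(φ,G)} t iff t = s⟨(φ,G),G'⟩X for some G' and MCS X. -/
def ctr {P n} (X0 : Set (Formula P n)) (a : CAct P n) (s t : CState X0) : Prop :=
  ∃ (G' : Grp n) (Y : Set (Formula P n)), MCS Y ∧ t.1 = s.1 ++ [⟨a.1, a.2, G', Y⟩]

theorem csim_equiv {P n} (X0 : Set (Formula P n)) (i : Fin n) : Equivalence (csim X0 i) := by
  constructor
  · intro s
    exact ⟨s.1.length, le_rfl, le_rfl, fun j _ => ⟨rfl, rfl⟩,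
      fun j h1 h2 => absurd h2 (by omega), fun j h1 h2 => absurd h2 (by omega)⟩
  · rintro s t ⟨k, h1, h2, h3, h4, h5⟩
    exact ⟨k, h2, h1, fun j hj => ⟨(h3 j hj).1.symm, (h3 j hj).2.symm⟩, h5, h4⟩
  · rintro s t u ⟨k1, hk1s, hk1t, heq1, hs1, ht1⟩ ⟨k2, hk2t, hk2u, heq2, ht2, hu2⟩
    refine ⟨min k1 k2, le_trans (min_le_left _ _) hk1s, le_trans (min_le_right _ _) hk2u,
      ?_, ?_, ?_⟩
    · intro j hj
      have e1 := heq1 j (lt_of_lt_of_le hj (min_le_left _ _))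
      have e2 := heq2 j (lt_of_lt_of_le hj (min_le_right _ _))
      exact ⟨e1.1.trans e2.1, e1.2.trans e2.2⟩
    · intro j hj hjs
      by_cases h : k1 ≤ j
      · exact hs1 j h hjs
      · have hj2 : k2 ≤ j := by omega
        have hjt : j < t.1.length := by omega
        have := ht2 j hj2 hjt
        have e := (heq1 j (by omega)).2
        rw [e]; exact this
    · intro j hj hju
      by_cases h : k2 ≤ j
      · exact hu2 j h hju
      · have hj1 : k1 ≤ j := by omega
        have hjt : j < t.1.length := by omega
        have := ht1 j hj1 hjt
        have e := (heq2 j (by omega)).2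
        rw [← e]; exact this

theorem cA_empty {P : Type} {n : ℕ} : (cA (P := P) (n := n) ∅) = ∅ := by
  ext a; simp [cA]

theorem cA_disj {P : Type} {n : ℕ} (G H : Grp n) (h : G ⊂ H) :
    cA (P := P) (n := n) G ∩ cA H = ∅ := by
  ext a
  simp only [Set.mem_inter_iff, Set.mem_empty_iff_false, iff_false, cA, Set.mem_setOf_eq]
  rintro ⟨⟨rfl, -⟩, ⟨h2, -⟩⟩
  exact h.ne h2

/-- The canonical model M^c(X_0). -/
def canonicalModel {P : Type} {n : ℕ} (X0 : Set (Formula P n)) : KhModel P n where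
  State := CState X0
  Act := CAct P n
  sim := csim X0
  sim_equiv := csim_equiv X0
  A := cA
  A_empty := cA_empty
  A_disj := cA_disj
  tr := ctr X0
  V := fun p => {s : CState X0 | Formula.atom p ∈ edOf X0 s.1}

section Hilbert

variable {P : Type} {n : ℕ} {A B C : Formula P n}

namespace Provable

theorem imp_trans (h₁ : Provable (A.imp B)) (h₂ : Provable (B.imp C)) : Provable (A.imp C) := by
  refine mp (mp (taut fun v => ?_) h₁) h₂
  simp only [Formula.imp, beval]; grind

theorem imp_mp (h₁ : Provable (A.imp (B.imp C))) (h₂ : Provable (A.imp B)) :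
    Provable (A.imp C) := by
  refine mp (mp (taut fun v => ?_) h₁) h₂
  simp only [Formula.imp, beval]; grind

theorem imp_of (h : Provable B) : Provable (A.imp B) := by
  refine mp (taut fun v => ?_) h
  simp only [Formula.imp, beval]; grind

theorem and_left : Provable ((A.and B).imp A) :=
  taut fun v => by simp only [Formula.imp, beval]; grind

theorem and_right : Provable ((A.and B).imp B) :=
  taut fun v => by simp only [Formula.imp, beval]; grind

theorem curry (h : Provable ((A.and B).imp C)) : Provable (A.imp (B.imp C)) := by
  refine mp (taut fun v => ?_) h
  simp only [Formula.imp, beval]; grind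

theorem curry_swap (h : Provable ((A.and B).imp C)) : Provable (B.imp (A.imp C)) := by
  refine mp (taut fun v => ?_) h
  simp only [Formula.imp, beval]; grind

theorem of_top_imp (h : Provable (Formula.top.imp A)) : Provable A := by
  refine mp (mp (taut fun v => ?_) h) (taut (φ := Formula.top) fun _ => rfl)
  simp only [Formula.imp, beval]; grind

theorem imp_conj {L : List (Formula P n)} (h : ∀ χ ∈ L, Provable (A.imp χ)) :
    Provable (A.imp (conj L)) := by
  induction L with
  | nil => exact imp_of (taut fun _ => rfl)
  | cons χ L ih =>
    have hχ : Provable (A.imp χ) := h χ List.mem_cons_self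
    have hL : Provable (A.imp (conj L)) := ih fun χ' hχ' => h χ' (List.mem_cons_of_mem _ hχ')
    have hcons : Provable (χ.imp ((conj L).imp (conj (χ :: L)))) :=
      taut fun v => by simp only [conj, List.foldr, Formula.imp, beval]; grind
    exact imp_mp (imp_mp (imp_of hcons) hχ) hL

theorem conj_imp_of_mem {χ : Formula P n} {L : List (Formula P n)} (h : χ ∈ L) :
    Provable ((conj L).imp χ) := by
  induction L with
  | nil => simp at h
  | cons a L ih =>
    rcases List.mem_cons.1 h with rfl | h
    · exact and_left
    · exact imp_trans and_right (ih h)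

theorem conj_append_imp_left (L M : List (Formula P n)) :
    Provable ((conj (L ++ M)).imp (conj L)) :=
  imp_conj fun _ h => conj_imp_of_mem (List.mem_append_left M h)

theorem conj_append_imp_right (L M : List (Formula P n)) :
    Provable ((conj (L ++ M)).imp (conj M)) :=
  imp_conj fun _ h => conj_imp_of_mem (List.mem_append_right L h)

end Provable

end Hilbert

section MaximalConsistent

variable {P : Type} {n : ℕ} {X : Set (Formula P n)} {φ ψ : Formula P n}

theorem exists_conj_imp_of_not_consistent_insert (h : ¬ Consistent (insert φ X)) :
    ∃ L : List (Formula P n), (∀ χ ∈ L, χ ∈ X) ∧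
      Provable ((conj L).imp (φ.imp Formula.bot)) := by
  classical
  obtain ⟨L, hL, hbot⟩ := not_not.1 h
  refine ⟨L.filter (· ∈ X), fun χ hχ => by simpa using (List.mem_filter.1 hχ).2, ?_⟩
  have hsplit : Provable (((conj (L.filter (· ∈ X))).and φ).imp (conj L)) := by
    refine Provable.imp_conj fun χ hχ => ?_
    rcases Set.mem_insert_iff.1 (hL χ hχ) with rfl | hχX
    · exact Provable.and_right
    · exact Provable.imp_trans Provable.and_left
        (Provable.conj_imp_of_mem (List.mem_filter.2 ⟨hχ, by simpa using hχX⟩))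
  exact Provable.curry (Provable.imp_trans hsplit hbot)

theorem Consistent.not_mem_neg (hX : Consistent X) (hφ : φ ∈ X) : φ.neg ∉ X := fun hneg =>
  hX ⟨[φ, φ.neg], by simp [hφ, hneg],
    Provable.taut fun v => by simp only [conj, List.foldr, Formula.imp, Formula.bot, beval]; grind⟩

theorem exists_mcs_superset (h : Consistent X) : ∃ Y, X ⊆ Y ∧ MCS Y := by
  have hchain : ∀ c ⊆ {Z : Set (Formula P n) | Consistent Z}, IsChain (· ⊆ ·) c → c.Nonempty →
      ∃ ub ∈ {Z : Set (Formula P n) | Consistent Z}, ∀ Z ∈ c, Z ⊆ ub := by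
    intro c hc hchain hne
    refine ⟨⋃₀ c, ?_, fun Z hZ => Set.subset_sUnion_of_mem hZ⟩
    rintro ⟨L, hL, hbot⟩
    obtain ⟨Z, hZc, hLZ⟩ := hchain.directedOn.exists_mem_subset_of_finite_of_subset_sUnion hne
      L.finite_toSet hL
    exact hc hZc ⟨L, hLZ, hbot⟩
  obtain ⟨Y, hXY, hmax⟩ := zorn_subset_nonempty _ hchain X h
  exact ⟨Y, hXY, hmax.1, fun φ hφ hcons =>
    hφ (hmax.2 hcons (Set.subset_insert φ Y) (Set.mem_insert φ Y))⟩

namespace MCS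

theorem mem_of_conj_imp (hX : MCS X) {L : List (Formula P n)} (hL : ∀ χ ∈ L, χ ∈ X)
    (h : Provable ((conj L).imp φ)) : φ ∈ X := by
  by_contra hφ
  obtain ⟨M, hM, hMφ⟩ := exists_conj_imp_of_not_consistent_insert (hX.2 φ hφ)
  refine hX.1 ⟨L ++ M, fun χ hχ => (List.mem_append.1 hχ).elim (hL χ) (hM χ), ?_⟩
  exact Provable.imp_mp (Provable.imp_trans (Provable.conj_append_imp_right L M) hMφ)
    (Provable.imp_trans (Provable.conj_append_imp_left L M) h)

theorem mem_of_provable (hX : MCS X) (h : Provable φ) : φ ∈ X :=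
  hX.mem_of_conj_imp (L := []) (by simp) (Provable.imp_of h)

theorem mp (hX : MCS X) (himp : φ.imp ψ ∈ X) (hφ : φ ∈ X) : ψ ∈ X := by
  refine hX.mem_of_conj_imp (L := [φ, φ.imp ψ]) (by simp [hφ, himp]) (Provable.taut fun v => ?_)
  simp only [conj, List.foldr, Formula.imp, beval]; grind

theorem mp_of_provable (hX : MCS X) (himp : Provable (φ.imp ψ)) (hφ : φ ∈ X) : ψ ∈ X :=
  hX.mp (hX.mem_of_provable himp) hφ

theorem imp_mem (hX : MCS X) (h : φ ∈ X → ψ ∈ X) : φ.imp ψ ∈ X := by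
  by_cases hφ : φ ∈ X
  · refine hX.mp_of_provable (Provable.taut fun v => ?_) (h hφ)
    simp only [Formula.imp, beval]; grind
  · obtain ⟨L, hL, hLφ⟩ := exists_conj_imp_of_not_consistent_insert (hX.2 φ hφ)
    refine hX.mem_of_conj_imp hL (Provable.imp_trans hLφ (Provable.taut fun v => ?_))
    simp only [Formula.imp, Formula.bot, beval]; grind

theorem K_mp (hX : MCS X) {G : Grp n} (himp : Formula.K G (φ.imp ψ) ∈ X)
    (hφ : Formula.K G φ ∈ X) : Formula.K G ψ ∈ X :=
  hX.mp (hX.mp_of_provable (Provable.curry Provable.distK) hφ) himp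

theorem K_mem_of_conj_imp (hX : MCS X) {G : Grp n} {L : List (Formula P n)}
    (hL : ∀ χ ∈ L, Formula.K G χ ∈ X) (h : Provable ((conj L).imp φ)) :
    Formula.K G φ ∈ X := by
  induction L generalizing φ with
  | nil => exact hX.mem_of_provable (Provable.necK (Provable.of_top_imp h))
  | cons a L ih =>
    exact hX.K_mp (ih (fun χ hχ => hL χ (List.mem_cons_of_mem _ hχ)) (Provable.curry_swap h))
      (hL a List.mem_cons_self)

theorem K_mem_of_forall (hX : MCS X) {G : Grp n}
    (h : ∀ Y, MCS Y → (∀ χ, Formula.K G χ ∈ X → χ ∈ Y) → φ ∈ Y) : Formula.K G φ ∈ X := by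
  by_contra hK
  have hcons : Consistent (insert φ.neg {χ | Formula.K G χ ∈ X}) := by
    by_contra hincons
    obtain ⟨L, hL, hLφ⟩ := exists_conj_imp_of_not_consistent_insert hincons
    refine hK (hX.K_mem_of_conj_imp hL (Provable.imp_trans hLφ (Provable.taut fun v => ?_)))
    simp only [Formula.imp, Formula.bot, beval]; grind
  obtain ⟨Y, hsub, hY⟩ := exists_mcs_superset hcons
  exact hY.1.not_mem_neg (h Y hY fun χ hχ => hsub (Set.mem_insert_of_mem _ hχ))
    (hsub (Set.mem_insert _ _))

theorem Kh_mem_of_K_empty_imp (hX : MCS X) {G H : Grp n} (hHG : H ⊆ G)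
    (hψ : Formula.Kh H ψ ∈ X) (himp : Formula.K ∅ ((Formula.K H ψ).imp (Formula.Kh G φ)) ∈ X) :
    Formula.Kh G φ ∈ X := by
  have hKhK : Formula.Kh G (Formula.K H ψ) ∈ X :=
    hX.mp_of_provable (Provable.axKhMono hHG) (hX.mp_of_provable Provable.axKhtoKhK hψ)
  have hmono : (Formula.Kh G (Formula.K H ψ)).imp (Formula.Kh G (Formula.Kh G φ)) ∈ X :=
    hX.mp_of_provable Provable.axT (hX.mp_of_provable Provable.axEmpMono himp)
  exact hX.mp_of_provable Provable.axKhKh (hX.mp hmono hKhK)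

end MCS

end MaximalConsistent

section CanonicalModel

variable {P : Type} {n : ℕ} {X0 : Set (Formula P n)}

theorem edOf_append (X0 : Set (Formula P n)) (l : List (CStep P n)) (c : CStep P n) :
    edOf X0 (l ++ [c]) = c.X := by
  simp [edOf]

theorem goodFrom_append {l : List (CStep P n)} {c : CStep P n} :
    goodFrom X0 (l ++ [c]) ↔ goodFrom X0 l ∧ MCS c.X ∧ c.G ≠ ∅ ∧
      Formula.Kh c.G c.fml ∈ edOf X0 l ∧ Formula.K c.G c.fml ∈ c.X ∧
      (∀ ψ, Formula.K c.H ψ ∈ edOf X0 l → ψ ∈ c.X) := by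
  induction l generalizing X0 with
  | nil => simp [goodFrom, edOf]
  | cons d l ih =>
    simp only [List.cons_append, goodFrom, ih]
    exact ⟨fun ⟨h₁, h₂, h₃, h₄, h₅, h₆⟩ => ⟨⟨h₁, h₂, h₃, h₄, h₅, h₆.1⟩, h₆.2⟩,
      fun ⟨⟨h₁, h₂, h₃, h₄, h₅, h₆⟩, h₇⟩ => ⟨h₁, h₂, h₃, h₄, h₅, h₆, h₇⟩⟩

theorem mcs_edOf (hX0 : MCS X0) {l : List (CStep P n)} (hl : goodFrom X0 l) :
    MCS (edOf X0 l) := by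
  induction l generalizing X0 with
  | nil => exact hX0
  | cons c l ih => exact ih hl.1 hl.2.2.2.2.2

theorem Kh_mem_edOf_of_ctr {s t : CState X0} {ψ : Formula P n} {H : Grp n}
    (h : ctr X0 (ψ, H) s t) : Formula.Kh H ψ ∈ edOf X0 s.1 := by
  obtain ⟨G', Y, -, ht⟩ := h
  have := t.2
  rw [ht] at this
  exact (goodFrom_append.1 this).2.2.2.1

theorem exists_ctr_edOf_eq (s : CState X0) {ψ : Formula P n} {H G' : Grp n}
    {Y : Set (Formula P n)} (hY : MCS Y) (hH : H ≠ ∅) (hKh : Formula.Kh H ψ ∈ edOf X0 s.1)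
    (hK : Formula.K H ψ ∈ Y) (hsub : ∀ χ, Formula.K G' χ ∈ edOf X0 s.1 → χ ∈ Y) :
    ∃ t : CState X0, ctr X0 (ψ, H) s t ∧ edOf X0 t.1 = Y :=
  ⟨⟨s.1 ++ [⟨ψ, H, G', Y⟩], goodFrom_append.2 ⟨s.2, hY, hH, hKh, hK, hsub⟩⟩,
    ⟨G', Y, hY, rfl⟩, edOf_append _ _ _⟩

end CanonicalModel

/-- Existence lemma for Kh in the canonical model: let ∅ ≠ H ⊆ G
and let (ψ,H) be executable on [s]_G. If Kh_G φ ∈ ed(s') for every s' with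
[s]_G →_{(ψ,H)} [s']_G, then Kh_G φ ∈ ed(s). -/
theorem kh_existence {P : Type} [Countable P] {n : ℕ}
    (X0 : Set (Formula P n)) (hX0 : MCS X0)
    (s : CState X0) (G H : Grp n) (hH : H ≠ ∅) (hHG : H ⊆ G)
    (ψ φ : Formula P n)
    (hexec : ∀ u : CState X0, (∀ i ∈ G, csim X0 i s u) → ∃ v, ctr X0 (ψ, H) u v)
    (hsucc : ∀ s' : CState X0,
      (∃ u v : CState X0, (∀ i ∈ G, csim X0 i s u) ∧ (∀ i ∈ G, csim X0 i s' v) ∧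
        ctr X0 (ψ, H) u v) →
      Formula.Kh G φ ∈ edOf X0 s'.1) :
    Formula.Kh G φ ∈ edOf X0 s.1 := by
  have hX : MCS (edOf X0 s.1) := mcs_edOf hX0 s.2
  have hrefl (u : CState X0) : ∀ i ∈ G, csim X0 i u u := fun i _ => (csim_equiv X0 i).refl u
  obtain ⟨v, hv⟩ := hexec s (hrefl s)
  have hKh : Formula.Kh H ψ ∈ edOf X0 s.1 := Kh_mem_edOf_of_ctr hv
  have hK : Formula.K ∅ ((Formula.K H ψ).imp (Formula.Kh G φ)) ∈ edOf X0 s.1 := by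
    refine hX.K_mem_of_forall fun Y hY hsub => hY.imp_mem fun hKY => ?_
    obtain ⟨t, hst, rfl⟩ := exists_ctr_edOf_eq s hY hH hKh hKY hsub
    exact hsucc t ⟨s, t, hrefl s, hrefl t, hst⟩
  exact hX.Kh_mem_of_K_empty_imp hHG hKh hK

end DKH
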